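/- Let n ≥ 1 and α, β ∈ P_n. (1) If α L β in P_n, then Φ(α,η) = Φ(β,η) for all η ∈ P_n. (2) If α R β in P_n, then Φ(η,α) = Φ(η,β) for all η ∈ P_n. -/
import Mathlib


namespace TPM

/-- Vertex set `{1,…,n} ∪ {1',…,n'}`: `Sum.inl` = unprimed (upper row),
`Sum.inr` = primed (lower row). -/
abbrev V (n : ℕ) := Fin n ⊕ Fin n

/-- The partition monoid `P_n`: set partitions of the `2n`-element set `V n`,
encoded as equivalence relations (setoids). -/
abbrev PM (n : ℕ) := Setoid (V n)

/-- Three-row vertex set of the product graph: top / middle / bottom. -/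
abbrev W (n : ℕ) := Fin n ⊕ (Fin n ⊕ Fin n)

variable {n : ℕ}

/-- First factor: unprimed ↦ top, primed ↦ middle. -/
def topMid : V n → W n
  | Sum.inl i => Sum.inl i
  | Sum.inr i => Sum.inr (Sum.inl i)

/-- Second factor: unprimed ↦ middle, primed ↦ bottom. -/
def midBot : V n → W n
  | Sum.inl i => Sum.inr (Sum.inl i)
  | Sum.inr i => Sum.inr (Sum.inr i)

/-- Embedding of `V n` as top and bottom rows of the three-row set. -/
def topBot : V n → W n
  | Sum.inl i => Sum.inl i
  | Sum.inr i => Sum.inr (Sum.inr i)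

/-- Edge relation of the product graph `Γ(α,β)`. -/
def graphRel (α β : PM n) (x y : W n) : Prop :=
  (∃ u v : V n, α.r u v ∧ x = topMid u ∧ y = topMid v) ∨
  (∃ u v : V n, β.r u v ∧ x = midBot u ∧ y = midBot v)

/-- Connectivity (equivalence closure of the edge relation) in `Γ(α,β)`. -/
def conn (α β : PM n) : W n → W n → Prop := Relation.EqvGen (graphRel α β)

/-- Connectivity in `Γ(α,β)`, as a setoid on the three-row vertex set. -/
def connSetoid (α β : PM n) : Setoid (W n) :=
  ⟨conn α β, Relation.EqvGen.is_equivalence _⟩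

/-- The product of two partitions: `x,y` lie in the same block of `αβ` iff they are
connected in `Γ(α,β)`. -/
def pmul (α β : PM n) : PM n :=
  ⟨fun x y => conn α β (topBot x) (topBot y),
    ⟨fun _ => Relation.EqvGen.refl _, fun h => Relation.EqvGen.symm _ _ h, fun h h' => Relation.EqvGen.trans _ _ _ h h'⟩⟩

/-- A vertex of the three-row set lies in the middle row. -/
def isMid (x : W n) : Prop := ∃ i : Fin n, x = Sum.inr (Sum.inl i)

/-- `Φ(α,β)`: the number of floating components of `Γ(α,β)`, i.e. connected components
all of whose vertices lie in the middle row. -/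
noncomputable def Phi (α β : PM n) : ℕ :=
  Nat.card {c : Quotient (connSetoid α β) //
    ∀ x : W n, Quotient.mk (connSetoid α β) x = c → isMid x}

/-- The rank of a partition: the number of transversal blocks (blocks containing both an
unprimed and a primed element). -/
noncomputable def rnk (α : PM n) : ℕ :=
  Nat.card {c : Quotient α //
    (∃ i : Fin n, Quotient.mk α (Sum.inl i) = c) ∧ ∃ i : Fin n, Quotient.mk α (Sum.inr i) = c}

/-- Which row of `V n` a point lies in. -/
def side : V n → Bool
  | Sum.inl _ => true
  | Sum.inr _ => false

/-- `α̂`: split each transversal of `α` into its unprimed part and its primed part. -/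
def hat (α : PM n) : PM n :=
  ⟨fun x y => α.r x y ∧ side x = side y,
    ⟨fun x => ⟨α.iseqv.refl x, rfl⟩,
     fun h => ⟨α.iseqv.symm h.1, h.2.symm⟩,
     fun h h' => ⟨α.iseqv.trans h.1 h'.1, h.2.trans h'.2⟩⟩⟩

/-- The twisted product on `ℕ × P_n`:  `(i,α)(j,β) = (i + j + Φ(α,β), αβ)`. -/
noncomputable def tmul (a b : ℕ × PM n) : ℕ × PM n :=
  (a.1 + b.1 + Phi a.2 b.2, pmul a.2 b.2)

/-- A congruence on a set equipped with a binary operation: an equivalence relation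
compatible with the operation on both sides. -/
def IsCongruence {M : Type*} (mul : M → M → M) (σ : M → M → Prop) : Prop :=
  Equivalence σ ∧ ∀ x y a, σ x y → σ (mul a x) (mul a y) ∧ σ (mul x a) (mul y a)

/-- Green's relation `R`: equality of the right ideals `xM = yM`. -/
def greenR {M : Type*} (mul : M → M → M) (x y : M) : Prop :=
  Set.range (mul x) = Set.range (mul y)

/-- Green's relation `L`: `Mx = My`. -/
def greenL {M : Type*} (mul : M → M → M) (x y : M) : Prop :=
  Set.range (fun a => mul a x) = Set.range (fun a => mul a y)

/-- The principal two-sided ideal `MxM`. -/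
def jSet {M : Type*} (mul : M → M → M) (x : M) : Set M :=
  Set.range (fun p : M × M => mul (mul p.1 x) p.2)

/-- Green's relation `J`: `MxM = MyM`. -/
def greenJ {M : Type*} (mul : M → M → M) (x y : M) : Prop :=
  jSet mul x = jSet mul y

/-- Green's relation `H = R ∩ L`. -/
def greenH {M : Type*} (mul : M → M → M) (x y : M) : Prop :=
  greenR mul x y ∧ greenL mul x y

/-- Green's relation `D = R ∘ L`. -/
def greenD {M : Type*} (mul : M → M → M) (x y : M) : Prop :=
  ∃ z, greenR mul x z ∧ greenL mul z y

/-- `pd(α,β)` satisfies `P`, where `α` has `p` transversals: there are representatives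
`a s` of the upper parts of the `p` (pairwise distinct) transversals of `α`, with `b s`
representing the corresponding lower parts, and a permutation `π` with `P π` such that the
block of `β` containing `a s` contains `b (π s)`.  (For H-related `α, β ∈ D_p` this says
exactly that some representation of the permutational difference `pd(α,β)` satisfies `P`.) -/
def pdIn (p : ℕ) (P : Equiv.Perm (Fin p) → Prop) (α β : PM n) : Prop :=
  ∃ (a b : Fin p → Fin n) (π : Equiv.Perm (Fin p)),
    (∀ s t, α.r (Sum.inl (a s)) (Sum.inl (a t)) → s = t) ∧
    (∀ s, α.r (Sum.inl (a s)) (Sum.inr (b s))) ∧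
    (∀ s, β.r (Sum.inl (a s)) (Sum.inr (b (π s)))) ∧
    P π

/-- The relation `ν_N` on `D_p`, for a subgroup `N ≤ S_p`:  H-related pairs of rank-`p`
partitions whose permutational difference lies in `N`. -/
def nuRel (p : ℕ) (N : Subgroup (Equiv.Perm (Fin p))) (α β : PM n) : Prop :=
  rnk α = p ∧ rnk β = p ∧ greenH pmul α β ∧ pdIn p (· ∈ N) α β

/-- The congruence `(m, m+d)^♯` on the additive monoid `ℕ` (intended for `d ≥ 1`). -/
def natCong (m d : ℕ) (i j : ℕ) : Prop :=
  i = j ∨ (m ≤ i ∧ m ≤ j ∧ i % d = j % d)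

/-- `min θ ≤ i` for a congruence `θ` on `ℕ` (with `min Δ_ℕ = ∞`). -/
def minLE (θ : ℕ → ℕ → Prop) (i : ℕ) : Prop :=
  ∃ a b, θ a b ∧ a ≠ b ∧ a ≤ i

/-- `k ≤ min θ` for a congruence `θ` on `ℕ` (with `min Δ_ℕ = ∞`). -/
def leMin (k : ℕ) (θ : ℕ → ℕ → Prop) : Prop :=
  ∀ a b, θ a b → a ≠ b → k ≤ a

/-- The possible entries of a C-matrix. -/
inductive CEntry : Type
  | delta | muUp | muDown | mu | lam | rho | R
  | nsym (q : ℕ) (N : Subgroup (Equiv.Perm (Fin q)))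

/-- Whether a C-matrix entry is an N-symbol. -/
def isNsym : CEntry → Prop
  | CEntry.nsym _ _ => True
  | _ => False

/-- The allowed values of the symbol `ζ` in row types RT2, RT5, RT6. -/
def isZeta (e : CEntry) : Prop :=
  e = CEntry.mu ∨ e = CEntry.muUp ∨ e = CEntry.muDown ∨ e = CEntry.delta

/-- The allowed values of the symbol `ξ` in row types RT4–RT7: any of `μ,ρ,λ,R` if
`d = 1`, and only `μ` if `d > 1`. -/
def xiOK (d : ℕ) (e : CEntry) : Prop :=
  e = CEntry.mu ∨ (d = 1 ∧ (e = CEntry.rho ∨ e = CEntry.lam ∨ e = CEntry.R))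

/-- Row type RT1 for rows 0 and 1: all entries `Δ`. -/
def RT1 (M0 M1 : ℕ → CEntry) : Prop :=
  (∀ i, M0 i = CEntry.delta) ∧ (∀ i, M1 i = CEntry.delta)

/-- Row type RT2. -/
def RT2 (Θ0 Θ1 : ℕ → ℕ → Prop) (M0 M1 : ℕ → CEntry) : Prop :=
  Θ0 = Eq ∧ Θ1 = Eq ∧
  ∃ i ζ, isZeta ζ ∧
    (∀ j, j < i → M0 j = CEntry.delta) ∧ (∀ j, i ≤ j → M0 j = CEntry.mu) ∧
    (∀ j, j < i → M1 j = CEntry.delta) ∧ M1 i = ζ ∧ (∀ j, i < j → M1 j = CEntry.mu)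

/-- Row type RT3. -/
def RT3 (Θ0 : ℕ → ℕ → Prop) (M0 M1 : ℕ → CEntry) : Prop :=
  ∃ m ξ, Θ0 = natCong m 1 ∧ (ξ = CEntry.rho ∨ ξ = CEntry.lam ∨ ξ = CEntry.R) ∧
    (∀ i, M1 i = CEntry.delta) ∧
    (∀ j, j < m → M0 j = CEntry.delta) ∧ (∀ j, m ≤ j → M0 j = ξ)

/-- Row type RT4. -/
def RT4 (Θ0 Θ1 : ℕ → ℕ → Prop) (M0 M1 : ℕ → CEntry) : Prop :=
  ∃ m d ξ, 1 ≤ d ∧ Θ0 = natCong m d ∧ Θ1 = natCong m d ∧ xiOK d ξ ∧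
    (∀ j, j < m → M0 j = CEntry.delta ∧ M1 j = CEntry.delta) ∧
    (∀ j, m ≤ j → M0 j = ξ ∧ M1 j = ξ)

/-- Row type RT5. -/
def RT5 (Θ0 Θ1 : ℕ → ℕ → Prop) (M0 M1 : ℕ → CEntry) : Prop :=
  ∃ m d i ξ ζ, 1 ≤ d ∧ i < m ∧ Θ0 = natCong m d ∧ Θ1 = natCong (m + 1) d ∧
    xiOK d ξ ∧ isZeta ζ ∧
    (∀ j, j < i → M0 j = CEntry.delta) ∧ (∀ j, i ≤ j → j < m → M0 j = CEntry.mu) ∧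
    (∀ j, m ≤ j → M0 j = ξ) ∧
    (∀ j, j < i → M1 j = CEntry.delta) ∧ M1 i = ζ ∧
    (∀ j, i < j → j ≤ m → M1 j = CEntry.mu) ∧ (∀ j, m < j → M1 j = ξ)

/-- Row type RT6. -/
def RT6 (Θ0 Θ1 : ℕ → ℕ → Prop) (M0 M1 : ℕ → CEntry) : Prop :=
  ∃ m l d ξ ζ, 1 ≤ d ∧ m < l ∧ Θ0 = natCong m d ∧ Θ1 = natCong l d ∧
    xiOK d ξ ∧ isZeta ζ ∧
    (∀ j, j < m → M0 j = CEntry.delta) ∧ (∀ j, m ≤ j → M0 j = ξ) ∧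
    (∀ j, j < l - 1 → M1 j = CEntry.delta) ∧ M1 (l - 1) = ζ ∧ (∀ j, l ≤ j → M1 j = ξ)

/-- Row type RT7. -/
def RT7 (Θ0 Θ1 : ℕ → ℕ → Prop) (M0 M1 : ℕ → CEntry) : Prop :=
  ∃ m l d ξ, 1 ≤ d ∧ 0 < m ∧ m + 1 < l ∧ (l - 1) % d = m % d ∧
    Θ0 = natCong m d ∧ Θ1 = natCong l d ∧ xiOK d ξ ∧
    (∀ j, j < m - 1 → M0 j = CEntry.delta) ∧ M0 (m - 1) = CEntry.mu ∧
    (∀ j, m ≤ j → M0 j = ξ) ∧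
    (∀ j, j < l - 1 → M1 j = CEntry.delta) ∧ M1 (l - 1) = CEntry.mu ∧
    (∀ j, l ≤ j → M1 j = ξ)

/-- Row type RT8 for a row `q ≥ 2`: all entries `Δ`. -/
def RT8 (Mq : ℕ → CEntry) : Prop := ∀ i, Mq i = CEntry.delta

/-- Row type RT9 for a row `q ≥ 2`. -/
def RT9 (q : ℕ) (Θq : ℕ → ℕ → Prop) (Mq : ℕ → CEntry) : Prop :=
  ∃ (i k : ℕ) (Ns : ℕ → Subgroup (Equiv.Perm (Fin q))),
    i ≤ k ∧ leMin k Θq ∧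
    (∀ j, i ≤ j → j ≤ k → Ns j ≠ ⊥ ∧ (Ns j).Normal) ∧
    (∀ j j', i ≤ j → j ≤ j' → j' ≤ k → Ns j ≤ Ns j') ∧
    (∀ j, j < i → Mq j = CEntry.delta) ∧
    (∀ j, i ≤ j → j < k → Mq j = CEntry.nsym q (Ns j)) ∧
    (∀ j, k ≤ j → Mq j = CEntry.nsym q (Ns k))

/-- Row type RT10 for a row `q ≥ 2`. -/
def RT10 (q : ℕ) (Θq : ℕ → ℕ → Prop) (Mq : ℕ → CEntry) : Prop :=
  ∃ (i m : ℕ) (Ns : ℕ → Subgroup (Equiv.Perm (Fin q))),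
    i ≤ m ∧ Θq = natCong m 1 ∧
    (∀ j, i ≤ j → j < m → Ns j ≠ ⊥ ∧ (Ns j).Normal) ∧
    (∀ j j', i ≤ j → j ≤ j' → j' < m → Ns j ≤ Ns j') ∧
    (∀ j, j < i → Mq j = CEntry.delta) ∧
    (∀ j, i ≤ j → j < m → Mq j = CEntry.nsym q (Ns j)) ∧
    (∀ j, m ≤ j → Mq j = CEntry.R)

/-- A C-pair for `P_n^Φ`: a descending chain `Θ = (θ_0 ⊇ ⋯ ⊇ θ_n)` of congruences on
`(ℕ,+)` together with a matrix `M = (M_{qi})`, `0 ≤ q ≤ n`, `i ∈ ℕ`, whose rows 0 and 1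
jointly have one of the types RT1–RT7, whose rows `q ≥ 2` have one of the types RT8–RT10,
and which satisfies the verticality conditions (V1) and (V2). -/
def IsCPair (n : ℕ) (Θ : ℕ → ℕ → ℕ → Prop) (M : ℕ → ℕ → CEntry) : Prop :=
  (∀ q, q ≤ n → IsCongruence (· + ·) (Θ q)) ∧
  (∀ q r, q ≤ r → r ≤ n → ∀ i j, Θ r i j → Θ q i j) ∧
  (RT1 (M 0) (M 1) ∨ RT2 (Θ 0) (Θ 1) (M 0) (M 1) ∨ RT3 (Θ 0) (M 0) (M 1) ∨
    RT4 (Θ 0) (Θ 1) (M 0) (M 1) ∨ RT5 (Θ 0) (Θ 1) (M 0) (M 1) ∨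
    RT6 (Θ 0) (Θ 1) (M 0) (M 1) ∨ RT7 (Θ 0) (Θ 1) (M 0) (M 1)) ∧
  (∀ q, 2 ≤ q → q ≤ n → (RT8 (M q) ∨ RT9 q (Θ q) (M q) ∨ RT10 q (Θ q) (M q))) ∧
  (∀ q i, 1 ≤ q → q ≤ n → isNsym (M q i) →
    ¬(M (q - 1) i = CEntry.delta ∨ M (q - 1) i = CEntry.muUp ∨
      M (q - 1) i = CEntry.muDown ∨ isNsym (M (q - 1) i))) ∧
  (∀ q i, 2 ≤ q → q ≤ n → M q i = CEntry.R → M (q - 1) i = CEntry.R)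

/-- The relation `cg(Θ,M)` on `P_n^Φ` associated with a C-pair `(Θ,M)`: conditions
(C1)–(C8). -/
def cg (n : ℕ) (Θ : ℕ → ℕ → ℕ → Prop) (M : ℕ → ℕ → CEntry)
    (a b : ℕ × PM n) : Prop :=
  -- (C1)
  (M (rnk a.2) a.1 = CEntry.delta ∧ M (rnk b.2) b.1 = CEntry.delta ∧
    Θ (rnk a.2) a.1 b.1 ∧ a.2 = b.2) ∨
  -- (C2)
  (M (rnk a.2) a.1 = CEntry.R ∧ M (rnk b.2) b.1 = CEntry.R) ∨
  -- (C3)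
  (∃ p N, M (rnk a.2) a.1 = CEntry.nsym p N ∧ M (rnk b.2) b.1 = CEntry.nsym p N ∧
    Θ (rnk a.2) a.1 b.1 ∧ rnk a.2 = p ∧ greenH pmul a.2 b.2 ∧ pdIn p (· ∈ N) a.2 b.2) ∨
  -- (C4)
  (M (rnk a.2) a.1 = CEntry.lam ∧ M (rnk b.2) b.1 = CEntry.lam ∧
    greenL pmul (hat a.2) (hat b.2)) ∨
  -- (C5)
  (M (rnk a.2) a.1 = CEntry.rho ∧ M (rnk b.2) b.1 = CEntry.rho ∧
    greenR pmul (hat a.2) (hat b.2)) ∨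
  -- (C6)
  (M (rnk a.2) a.1 = CEntry.muDown ∧ M (rnk b.2) b.1 = CEntry.muDown ∧
    hat a.2 = hat b.2 ∧ greenL pmul a.2 b.2) ∨
  -- (C7)
  (M (rnk a.2) a.1 = CEntry.muUp ∧ M (rnk b.2) b.1 = CEntry.muUp ∧
    hat a.2 = hat b.2 ∧ greenR pmul a.2 b.2) ∨
  -- (C8)
  (M (rnk a.2) a.1 = CEntry.mu ∧ M (rnk b.2) b.1 = CEntry.mu ∧
    hat a.2 = hat b.2 ∧
    ((rnk a.2 = rnk b.2 ∧ Θ (rnk a.2) a.1 b.1) ∨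
     (rnk a.2 ≠ rnk b.2 ∧ Θ 0 (a.1 + rnk b.2) (b.1 + rnk a.2) ∧
        ¬ minLE (Θ (rnk a.2)) a.1 ∧ ¬ minLE (Θ (rnk b.2)) b.1) ∨
     (rnk a.2 ≠ rnk b.2 ∧ Θ 0 (a.1 + rnk b.2) (b.1 + rnk a.2) ∧
        minLE (Θ (rnk a.2)) a.1 ∧ minLE (Θ (rnk b.2)) b.1)))

/-- The C-pair `(Θ,M)` is exceptional with exceptional row `q`, where
`θ_q = (m, m+2d)^♯`. -/
def ExcAt (n : ℕ) (Θ : ℕ → ℕ → ℕ → Prop) (M : ℕ → ℕ → CEntry) (q m d : ℕ) : Prop :=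
  2 ≤ q ∧ q ≤ n ∧ 1 ≤ d ∧ Θ q = natCong m (2 * d) ∧
  ((2 < q ∧ M q m = CEntry.nsym q (alternatingGroup (Fin q))) ∨
   (q = 2 ∧ M 2 m = CEntry.delta ∧
     (M 1 m = CEntry.mu ∨ M 1 m = CEntry.rho ∨ M 1 m = CEntry.lam ∨ M 1 m = CEntry.R) ∧
     (∀ i j, natCong m d i j → Θ 1 i j)))

/-- The exceptional congruence `cgx(Θ,M)` associated with an exceptional C-pair:
`cg(Θ,M)` together with the pairs of (C9). -/
def cgx (n : ℕ) (Θ : ℕ → ℕ → ℕ → Prop) (M : ℕ → ℕ → CEntry) (q m d : ℕ)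
    (a b : ℕ × PM n) : Prop :=
  cg n Θ M a b ∨
  (rnk a.2 = q ∧ rnk b.2 = q ∧ natCong m d a.1 b.1 ∧ ¬ Θ q a.1 b.1 ∧
    greenH pmul a.2 b.2 ∧ pdIn q (fun π => π ∉ alternatingGroup (Fin q)) a.2 b.2)

/-- The Rees relation of a subset `I`. -/
def rees {M : Type*} (I : Set M) (x y : M) : Prop := x = y ∨ (x ∈ I ∧ y ∈ I)

/-- A (possibly empty) ideal of `P_n^Φ`: `MIM ⊆ I`. -/
def tIdeal (n : ℕ) (I : Set (ℕ × PM n)) : Prop :=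
  ∀ a b x, x ∈ I → tmul (tmul a x) b ∈ I

/-- `I(σ)`: the union of all ideals `I` of `P_n^Φ` whose Rees congruence is contained
in `σ`. -/
def Isig (n : ℕ) (σ : (ℕ × PM n) → (ℕ × PM n) → Prop) : Set (ℕ × PM n) :=
  ⋃₀ {I | tIdeal n I ∧ ∀ x y, rees I x y → σ x y}

/-- The 0-twisted partition monoid `P_{n,0}^Φ`, carried by `Option (P_n)` with
`none` the zero element `✗`. -/
noncomputable def mul0 (a b : Option (PM n)) : Option (PM n) :=
  match a, b with
  | some α, some β => if Phi α β = 0 then some (pmul α β) else none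
  | _, _ => none

/-- `rank a ≤ q`, where `rank ✗ = -∞`. -/
def rnkLE (a : Option (PM n)) (q : ℕ) : Prop :=
  ∀ α, a = some α → rnk α ≤ q

/-- The Rees congruence `R_q` on `P_{n,0}^Φ`. -/
def ReesQ (q : ℕ) (a b : Option (PM n)) : Prop :=
  a = b ∨ (rnkLE a q ∧ rnkLE b q)

/-- Lift a relation on `P_n` to `P_{n,0}^Φ = P_n ∪ {✗}`. -/
def lift2 (r : PM n → PM n → Prop) (a b : Option (PM n)) : Prop :=
  ∃ α β, a = some α ∧ b = some β ∧ r α β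



/-! ### Auxiliary machinery for `green_floating` -/

/-- Middle-row vertex. -/
def midv (i : Fin n) : W n := Sum.inr (Sum.inl i)

/-- Restriction of `α` to the primed (lower) row. -/
def lowR (α : PM n) (i j : Fin n) : Prop := α.r (Sum.inr i) (Sum.inr j)

/-- Restriction of `α` to the unprimed (upper) row. -/
def upR (α : PM n) (i j : Fin n) : Prop := α.r (Sum.inl i) (Sum.inl j)

/-- `i'` lies in a transversal block of `α`. -/
def tS (α : PM n) (i : Fin n) : Prop := ∃ k, α.r (Sum.inl k) (Sum.inr i)

/-- `i` lies in a transversal block of `α`. -/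
def bS (α : PM n) (i : Fin n) : Prop := ∃ k, α.r (Sum.inr k) (Sum.inl i)

/-- Equivalence on the middle row generated by the lower data of the first factor and
the upper data of the second. -/
def auxS (L U : Fin n → Fin n → Prop) : Setoid (Fin n) :=
  ⟨Relation.EqvGen (fun i j => L i j ∨ U i j), Relation.EqvGen.is_equivalence _⟩

/-- Abstract count of floating components, from the interface data only. -/
noncomputable def phiAux (L : Fin n → Fin n → Prop) (T : Fin n → Prop)
    (U : Fin n → Fin n → Prop) (B : Fin n → Prop) : ℕ :=
  Nat.card {c : Quotient (auxS L U) //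
    ∀ i, Quotient.mk (auxS L U) i = c → ¬ T i ∧ ¬ B i}

theorem graphRel_symm {α β : PM n} {x y : W n} (h : graphRel α β x y) :
    graphRel α β y x := by
  rcases h with ⟨u, v, h, hx, hy⟩ | ⟨u, v, h, hx, hy⟩
  · exact Or.inl ⟨v, u, α.iseqv.symm h, hy, hx⟩
  · exact Or.inr ⟨v, u, β.iseqv.symm h, hy, hx⟩

theorem conn_iff_of_inv {α β : PM n} {Q : W n → Prop}
    (hQ : ∀ x y, graphRel α β x y → Q x → Q y) :
    ∀ x y, conn α β x y → (Q x ↔ Q y) := by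
  intro x y h
  induction h with
  | rel x y h => exact ⟨hQ x y h, hQ y x (graphRel_symm h)⟩
  | refl x => exact Iff.rfl
  | symm _ _ _ ih => exact ih.symm
  | trans _ _ _ _ _ ih1 ih2 => exact ih1.trans ih2

theorem auxS_to_conn (α η : PM n) {i j : Fin n}
    (h : (auxS (lowR α) (upR η)).r i j) : conn α η (midv i) (midv j) := by
  induction h with
  | rel x y h =>
    rcases h with h | h
    · exact Relation.EqvGen.rel _ _ (Or.inl ⟨Sum.inr x, Sum.inr y, h, rfl, rfl⟩)
    · exact Relation.EqvGen.rel _ _ (Or.inr ⟨Sum.inl x, Sum.inl y, h, rfl, rfl⟩)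
  | refl x => exact Relation.EqvGen.refl _
  | symm _ _ _ ih => exact Relation.EqvGen.symm _ _ ih
  | trans _ _ _ _ _ ih1 ih2 => exact Relation.EqvGen.trans _ _ _ ih1 ih2

theorem conn_midv_float (α η : PM n) {i : Fin n}
    (hfl : ∀ j, (auxS (lowR α) (upR η)).r i j → ¬ tS α j ∧ ¬ bS η j) :
    ∀ x, conn α η (midv i) x → ∃ j, x = midv j ∧ (auxS (lowR α) (upR η)).r i j := by
  have step : ∀ x y, graphRel α η x y →
      (∃ j, x = midv j ∧ (auxS (lowR α) (upR η)).r i j) →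
      (∃ j, y = midv j ∧ (auxS (lowR α) (upR η)).r i j) := by
    rintro x y he ⟨j, rfl, hij⟩
    rcases he with ⟨u, v, h, hx, hy⟩ | ⟨u, v, h, hx, hy⟩
    · cases u with
      | inl k => simp [topMid, midv] at hx
      | inr k =>
        have hk : j = k := by simpa [topMid, midv] using hx
        subst hk
        cases v with
        | inl l => exact absurd ⟨l, α.iseqv.symm h⟩ (hfl j hij).1
        | inr l =>
          exact ⟨l, hy,
            (auxS (lowR α) (upR η)).iseqv.trans hij
              (Relation.EqvGen.rel _ _ (Or.inl h))⟩
    · cases u with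
      | inr k => simp [midBot, midv] at hx
      | inl k =>
        have hk : j = k := by simpa [midBot, midv] using hx
        subst hk
        cases v with
        | inr l => exact absurd ⟨l, η.iseqv.symm h⟩ (hfl j hij).2
        | inl l =>
          exact ⟨l, hy,
            (auxS (lowR α) (upR η)).iseqv.trans hij
              (Relation.EqvGen.rel _ _ (Or.inr h))⟩
  intro x hx
  exact (conn_iff_of_inv step (midv i) x hx).mp
    ⟨i, rfl, (auxS (lowR α) (upR η)).iseqv.refl i⟩

theorem allMid_float (α η : PM n) {i : Fin n}
    (hm : ∀ x, Quotient.mk (connSetoid α η) x = Quotient.mk (connSetoid α η) (midv i) →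
      isMid x) :
    ∀ j, (auxS (lowR α) (upR η)).r i j → ¬ tS α j ∧ ¬ bS η j := by
  intro j hij
  have hconn : conn α η (midv j) (midv i) :=
    Relation.EqvGen.symm _ _ (auxS_to_conn α η hij)
  constructor
  · rintro ⟨k, hk⟩
    have e : conn α η (Sum.inl k) (midv j) :=
      Relation.EqvGen.rel _ _ (Or.inl ⟨Sum.inl k, Sum.inr j, hk, rfl, rfl⟩)
    have h2 := hm (Sum.inl k)
      (Quotient.sound (Relation.EqvGen.trans _ _ _ e hconn))
    rcases h2 with ⟨i', hi'⟩
    exact absurd hi' (by simp)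
  · rintro ⟨k, hk⟩
    have e : conn α η (Sum.inr (Sum.inr k)) (midv j) :=
      Relation.EqvGen.rel _ _ (Or.inr ⟨Sum.inr k, Sum.inl j, hk, rfl, rfl⟩)
    have h2 := hm (Sum.inr (Sum.inr k))
      (Quotient.sound (Relation.EqvGen.trans _ _ _ e hconn))
    rcases h2 with ⟨i', hi'⟩
    exact absurd hi' (by simp [midv])

noncomputable def fmap (α η : PM n) :
    {c : Quotient (auxS (lowR α) (upR η)) //
      ∀ i, Quotient.mk (auxS (lowR α) (upR η)) i = c → ¬ tS α i ∧ ¬ bS η i} →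
    {c : Quotient (connSetoid α η) //
      ∀ x : W n, Quotient.mk (connSetoid α η) x = c → isMid x} :=
  fun p => ⟨Quotient.lift (fun i => Quotient.mk (connSetoid α η) (midv i))
      (fun _ _ h => Quotient.sound (auxS_to_conn α η h)) p.1, by
    obtain ⟨c, hc⟩ := p
    induction c using Quotient.ind with
    | _ i =>
      intro x hx
      have hfl : ∀ j, (auxS (lowR α) (upR η)).r i j → ¬ tS α j ∧ ¬ bS η j :=
        fun j hj => hc j (Quotient.sound ((auxS (lowR α) (upR η)).iseqv.symm hj))
      have hcx : conn α η (midv i) x :=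
        Relation.EqvGen.symm _ _ (Quotient.exact hx)
      obtain ⟨j, rfl, -⟩ := conn_midv_float α η hfl x hcx
      exact ⟨j, rfl⟩⟩

theorem fmap_inj (α η : PM n) : Function.Injective (fmap α η) := by
  rintro ⟨c, hc⟩ ⟨c', hc'⟩ h
  obtain ⟨i, rfl⟩ := Quotient.exists_rep c
  obtain ⟨i', rfl⟩ := Quotient.exists_rep c'
  have hv : Quotient.mk (connSetoid α η) (midv i) =
      Quotient.mk (connSetoid α η) (midv i') := congrArg Subtype.val h
  have hconn : conn α η (midv i) (midv i') := Quotient.exact hv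
  have hfl : ∀ j, (auxS (lowR α) (upR η)).r i j → ¬ tS α j ∧ ¬ bS η j :=
    fun j hj => hc j (Quotient.sound ((auxS (lowR α) (upR η)).iseqv.symm hj))
  obtain ⟨j, hj, hr⟩ := conn_midv_float α η hfl _ hconn
  have : i' = j := by simpa [midv] using hj
  subst this
  exact Subtype.ext (Quotient.sound hr)

theorem fmap_surj (α η : PM n) : Function.Surjective (fmap α η) := by
  rintro ⟨d, hd⟩
  obtain ⟨x, rfl⟩ := Quotient.exists_rep d
  obtain ⟨i, rfl⟩ := hd x rfl
  refine ⟨⟨Quotient.mk (auxS (lowR α) (upR η)) i, ?_⟩, Subtype.ext rfl⟩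
  intro j hj
  exact allMid_float α η hd j ((auxS (lowR α) (upR η)).iseqv.symm (Quotient.exact hj))

theorem phi_eq_phiAux (α η : PM n) :
    Phi α η = phiAux (lowR α) (tS α) (upR η) (bS η) :=
  (Nat.card_congr (Equiv.ofBijective (fmap α η) ⟨fmap_inj α η, fmap_surj α η⟩)).symm

/-- The identity partition. -/
def iota : PM n := ⟨fun x y => Sum.elim id id x = Sum.elim id id y,
  ⟨fun _ => rfl, Eq.symm, Eq.trans⟩⟩

def collapseR : W n → V n
  | Sum.inl i => Sum.inl i
  | Sum.inr (Sum.inl i) => Sum.inr i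
  | Sum.inr (Sum.inr i) => Sum.inr i

def collapseL : W n → V n
  | Sum.inl i => Sum.inl i
  | Sum.inr (Sum.inl i) => Sum.inl i
  | Sum.inr (Sum.inr i) => Sum.inr i

theorem pmul_iota (α : PM n) : pmul α iota = α := by
  apply Setoid.ext
  intro x y
  constructor
  · intro h
    have key : ∀ a b, conn α iota a b → α.r (collapseR a) (collapseR b) := by
      intro a b hab
      induction hab with
      | rel a b h =>
        rcases h with ⟨u, v, huv, rfl, rfl⟩ | ⟨u, v, huv, rfl, rfl⟩
        · have e1 : ∀ u : V n, collapseR (topMid u) = u := by rintro (i | i) <;> rfl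
          rw [e1, e1]; exact huv
        · have e2 : ∀ u : V n, collapseR (midBot u) = Sum.inr (Sum.elim id id u) := by
            rintro (i | i) <;> rfl
          have huv' : Sum.elim id id u = Sum.elim id id v := huv
          rw [e2, e2, huv']
      | refl a => exact α.iseqv.refl _
      | symm _ _ _ ih => exact α.iseqv.symm ih
      | trans _ _ _ _ _ ih1 ih2 => exact α.iseqv.trans ih1 ih2
    have e3 : ∀ x : V n, collapseR (topBot x) = x := by rintro (i | i) <;> rfl
    have h2 := key _ _ h
    rwa [e3, e3] at h2
  · intro h
    have e1 : ∀ x : V n, conn α iota (topBot x) (topMid x) := by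
      rintro (i | i)
      · exact Relation.EqvGen.refl _
      · exact Relation.EqvGen.symm _ _
          (Relation.EqvGen.rel _ _ (Or.inr ⟨Sum.inl i, Sum.inr i, rfl, rfl, rfl⟩))
    exact Relation.EqvGen.trans _ _ _ (e1 x)
      (Relation.EqvGen.trans _ _ _
        (Relation.EqvGen.rel _ _ (Or.inl ⟨x, y, h, rfl, rfl⟩))
        (Relation.EqvGen.symm _ _ (e1 y)))

theorem iota_pmul (α : PM n) : pmul iota α = α := by
  apply Setoid.ext
  intro x y
  constructor
  · intro h
    have key : ∀ a b, conn iota α a b → α.r (collapseL a) (collapseL b) := by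
      intro a b hab
      induction hab with
      | rel a b h =>
        rcases h with ⟨u, v, huv, rfl, rfl⟩ | ⟨u, v, huv, rfl, rfl⟩
        · have e2 : ∀ u : V n, collapseL (topMid u) = Sum.inl (Sum.elim id id u) := by
            rintro (i | i) <;> rfl
          have huv' : Sum.elim id id u = Sum.elim id id v := huv
          rw [e2, e2, huv']
        · have e1 : ∀ u : V n, collapseL (midBot u) = u := by rintro (i | i) <;> rfl
          rw [e1, e1]; exact huv
      | refl a => exact α.iseqv.refl _
      | symm _ _ _ ih => exact α.iseqv.symm ih
      | trans _ _ _ _ _ ih1 ih2 => exact α.iseqv.trans ih1 ih2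
    have e3 : ∀ x : V n, collapseL (topBot x) = x := by rintro (i | i) <;> rfl
    have h2 := key _ _ h
    rwa [e3, e3] at h2
  · intro h
    have e1 : ∀ x : V n, conn iota α (topBot x) (midBot x) := by
      rintro (i | i)
      · exact Relation.EqvGen.rel _ _ (Or.inl ⟨Sum.inl i, Sum.inr i, rfl, rfl, rfl⟩)
      · exact Relation.EqvGen.refl _
    exact Relation.EqvGen.trans _ _ _ (e1 x)
      (Relation.EqvGen.trans _ _ _
        (Relation.EqvGen.rel _ _ (Or.inr ⟨x, y, h, rfl, rfl⟩))
        (Relation.EqvGen.symm _ _ (e1 y)))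

theorem lowR_pmul (γ β : PM n) {i j : Fin n} (h : lowR β i j) : lowR (pmul γ β) i j :=
  Relation.EqvGen.rel _ _ (Or.inr ⟨Sum.inr i, Sum.inr j, h, rfl, rfl⟩)

theorem upR_pmul (β γ : PM n) {i j : Fin n} (h : upR β i j) : upR (pmul β γ) i j :=
  Relation.EqvGen.rel _ _ (Or.inl ⟨Sum.inl i, Sum.inl j, h, rfl, rfl⟩)

theorem tS_pmul (γ β : PM n) {i : Fin n} (h : tS (pmul γ β) i) : tS β i := by
  by_contra hn
  obtain ⟨k, hk⟩ := h
  have step : ∀ x y, graphRel γ β x y →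
      (∃ u, β.r u (Sum.inr i) ∧ x = midBot u) →
      (∃ u, β.r u (Sum.inr i) ∧ y = midBot u) := by
    rintro x y he ⟨u, hu, rfl⟩
    rcases he with ⟨w, v, hwv, hx, hy⟩ | ⟨w, v, hwv, hx, hy⟩
    · cases u with
      | inl j =>
        cases w with
        | inl k' => simp [topMid, midBot] at hx
        | inr k' =>
          have hjk : j = k' := by simpa [topMid, midBot] using hx
          exact absurd ⟨j, hu⟩ hn
      | inr j => cases w <;> simp [topMid, midBot] at hx
    · cases u with
      | inl j =>
        cases w with
        | inl k' =>
          have hjk : j = k' := by simpa [midBot] using hx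
          subst hjk
          exact ⟨v, β.iseqv.trans (β.iseqv.symm hwv) hu, hy⟩
        | inr k' => simp [midBot] at hx
      | inr j =>
        cases w with
        | inl k' => simp [midBot] at hx
        | inr k' =>
          have hjk : j = k' := by simpa [midBot] using hx
          subst hjk
          exact ⟨v, β.iseqv.trans (β.iseqv.symm hwv) hu, hy⟩
  have hQ := conn_iff_of_inv step _ _ hk
  obtain ⟨u, -, hu⟩ := hQ.mpr ⟨Sum.inr i, β.iseqv.refl _, rfl⟩
  cases u <;> simp [topBot, midBot] at hu

theorem bS_pmul (β γ : PM n) {i : Fin n} (h : bS (pmul β γ) i) : bS β i := by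
  by_contra hn
  obtain ⟨k, hk⟩ := h
  have step : ∀ x y, graphRel β γ x y →
      (∃ u, β.r u (Sum.inl i) ∧ x = topMid u) →
      (∃ u, β.r u (Sum.inl i) ∧ y = topMid u) := by
    rintro x y he ⟨u, hu, rfl⟩
    rcases he with ⟨w, v, hwv, hx, hy⟩ | ⟨w, v, hwv, hx, hy⟩
    · have huw : u = w := by
        cases u <;> cases w <;> simp [topMid] at hx <;> simp [hx]
      subst huw
      exact ⟨v, β.iseqv.trans (β.iseqv.symm hwv) hu, hy⟩
    · cases u with
      | inl j => cases w <;> simp [topMid, midBot] at hx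
      | inr j =>
        cases w with
        | inl k' =>
          have hjk : j = k' := by simpa [topMid, midBot] using hx
          exact absurd ⟨j, hu⟩ hn
        | inr k' => simp [topMid, midBot] at hx
  have hQ := conn_iff_of_inv step _ _ hk
  obtain ⟨u, -, hu⟩ := hQ.mpr ⟨Sum.inl i, β.iseqv.refl _, rfl⟩
  cases u <;> simp [topBot, topMid] at hu

/-- If `α L β` in `P_n` then `Φ(α,η) = Φ(β,η)` for all `η`; and if
`α R β` in `P_n` then `Φ(η,α) = Φ(η,β)` for all `η`. -/
theorem green_floating (n : ℕ) (hn : 1 ≤ n) (α β : PM n) :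
    (greenL (pmul (n := n)) α β → ∀ η : PM n, Phi α η = Phi β η) ∧
    (greenR (pmul (n := n)) α β → ∀ η : PM n, Phi η α = Phi η β) := by
  constructor
  · intro hL η
    obtain ⟨γ, hγ⟩ : ∃ γ, pmul γ β = α := by
      have hmem : α ∈ Set.range (fun a => pmul a β) := by
        rw [← hL]; exact ⟨iota, iota_pmul α⟩
      exact hmem
    obtain ⟨δ, hδ⟩ : ∃ δ, pmul δ α = β := by
      have hmem : β ∈ Set.range (fun a => pmul a α) := by
        rw [hL]; exact ⟨iota, iota_pmul β⟩
      exact hmem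
    have hlow : lowR α = lowR β := by
      funext i j
      apply propext
      constructor
      · intro h
        rw [← hδ]; exact lowR_pmul δ α h
      · intro h
        rw [← hγ]; exact lowR_pmul γ β h
    have htS : tS α = tS β := by
      funext i
      apply propext
      constructor
      · intro h
        rw [← hγ] at h; exact tS_pmul γ β h
      · intro h
        rw [← hδ] at h; exact tS_pmul δ α h
    rw [phi_eq_phiAux, phi_eq_phiAux, hlow, htS]
  · intro hR η
    obtain ⟨γ, hγ⟩ : ∃ γ, pmul β γ = α := by
      have hmem : α ∈ Set.range (pmul β) := by
        rw [← hR]; exact ⟨iota, pmul_iota α⟩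
      exact hmem
    obtain ⟨δ, hδ⟩ : ∃ δ, pmul α δ = β := by
      have hmem : β ∈ Set.range (pmul α) := by
        rw [hR]; exact ⟨iota, pmul_iota β⟩
      exact hmem
    have hup : upR α = upR β := by
      funext i j
      apply propext
      constructor
      · intro h
        rw [← hδ]; exact upR_pmul α δ h
      · intro h
        rw [← hγ]; exact upR_pmul β γ h
    have hbS : bS α = bS β := by
      funext i
      apply propext
      constructor
      · intro h
        rw [← hγ] at h; exact bS_pmul β γ h
      · intro h
        rw [← hδ] at h; exact bS_pmul α δ h
    rw [phi_eq_phiAux, phi_eq_phiAux, hup, hbS]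


end TPM
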